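/- arXiv:2504.05114 — 5 statements merged into one kernel-verified Lean document; each statement's English description precedes it below -/
import Mathlib

section
/- Let WN = (P, T, F) be a safe and sound workflow net with at least one transition (equivalently, with ▶ ≠ ■). Then every run of WN, viewed as a finite trace over the alphabet T, is a model trace of the Declare specification DS(WN), i.e., it satisfies every constraint of DS(WN). (Theorem 1, direction (i).) -/
open Classical

/-- The edge relation of the underlying bipartite graph of a Petri net:
places and transitions are nodes, flow pairs are directed edges. -/
def NetEdge {P T : Type} (Fpt : P → T → Prop) (Ftp : T → P → Prop) :
    (P ⊕ T) → (P ⊕ T) → Prop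
  | Sum.inl p, Sum.inr t => Fpt p t
  | Sum.inr t, Sum.inl p => Ftp t p
  | _, _ => False

/-- A workflow net: a Petri net with flow relation split into its
place-to-transition part `Fpt` and transition-to-place part `Ftp`,
a unique initial place `source` (empty preset), a unique output place `sink`
(empty postset), and every node on a directed path from `source` to `sink`. -/
structure WorkflowNet (P T : Type) where
  Fpt : P → T → Prop
  Ftp : T → P → Prop
  source : P
  sink : P
  source_pre_empty : ∀ t, ¬ Ftp t source
  sink_post_empty : ∀ t, ¬ Fpt sink t
  source_unique : ∀ p, (∀ t, ¬ Ftp t p) → p = source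
  sink_unique : ∀ p, (∀ t, ¬ Fpt p t) → p = sink
  on_path : ∀ x : P ⊕ T,
    Relation.ReflTransGen (NetEdge Fpt Ftp) (Sum.inl source) x ∧
    Relation.ReflTransGen (NetEdge Fpt Ftp) x (Sum.inl sink)

variable {P T : Type}

/-- The preset `•p` of a place: transitions `t` with `(t, p) ∈ F`. -/
def preset (N : WorkflowNet P T) (p : P) : Set T := {t | N.Ftp t p}

/-- The postset `p•` of a place: transitions `t` with `(p, t) ∈ F`. -/
def postset (N : WorkflowNet P T) (p : P) : Set T := {t | N.Fpt p t}

/-- The initial marking: one token on the initial place, none elsewhere. -/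
noncomputable def initialMarking (N : WorkflowNet P T) : P → ℕ :=
  fun p => if p = N.source then 1 else 0

/-- The final marking: one token on the output place, none elsewhere. -/
noncomputable def finalMarking (N : WorkflowNet P T) : P → ℕ :=
  fun p => if p = N.sink then 1 else 0

/-- A marking enables `t` iff every input place of `t` holds a token. -/
def Enables (N : WorkflowNet P T) (M : P → ℕ) (t : T) : Prop :=
  ∀ p, N.Fpt p t → 0 < M p

/-- `Fires N M t M'`: `t` is enabled at `M` and firing it yields `M'`. -/
def Fires (N : WorkflowNet P T) (M : P → ℕ) (t : T) (M' : P → ℕ) : Prop :=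
  Enables N M t ∧ ∀ p,
    (N.Fpt p t ∧ ¬ N.Ftp t p → M' p = M p - 1) ∧
    (N.Ftp t p ∧ ¬ N.Fpt p t → M' p = M p + 1) ∧
    (¬ (N.Fpt p t ∧ ¬ N.Ftp t p) → ¬ (N.Ftp t p ∧ ¬ N.Fpt p t) → M' p = M p)

/-- Successive firing of a finite sequence of transitions from a marking. -/
inductive FiresSeq (N : WorkflowNet P T) : (P → ℕ) → List T → (P → ℕ) → Prop
  | nil (M : P → ℕ) : FiresSeq N M [] M
  | cons {M M' M'' : P → ℕ} {t : T} {σ : List T} :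
      Fires N M t M' → FiresSeq N M' σ M'' → FiresSeq N M (t :: σ) M''

/-- A firing sequence: fireable successively from the initial marking. -/
def FiringSequence (N : WorkflowNet P T) (σ : List T) : Prop :=
  ∃ M, FiresSeq N (initialMarking N) σ M

/-- A reachable marking. -/
def Reachable (N : WorkflowNet P T) (M : P → ℕ) : Prop :=
  ∃ σ, FiresSeq N (initialMarking N) σ M

/-- A run: a firing sequence leading from the initial to the final marking. -/
def IsRun (N : WorkflowNet P T) (σ : List T) : Prop :=
  FiresSeq N (initialMarking N) σ (finalMarking N)

/-- Safety: every reachable marking puts at most one token in each place. -/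
def Safe (N : WorkflowNet P T) : Prop :=
  ∀ M, Reachable N M → ∀ p, M p ≤ 1

/-- Soundness: option to complete, proper completion, no dead transitions. -/
def Sound (N : WorkflowNet P T) : Prop :=
  (∀ M, Reachable N M → ∃ σ, FiresSeq N M σ (finalMarking N)) ∧
  (∀ M, Reachable N M → 0 < M N.sink → M = finalMarking N) ∧
  (∀ t : T, ∃ M, Reachable N M ∧ Enables N M t)

/-- `AtMostOne(A)`: at most one position of the trace carries a symbol of `A`. -/
def AtMostOneC {α : Type} (A : Set α) (σ : List α) : Prop :=
  ∀ i j : Fin σ.length, σ.get i ∈ A → σ.get j ∈ A → i = j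

/-- `End(A)`: the trace is nonempty and its last symbol is in `A`. -/
def EndC {α : Type} (A : Set α) (σ : List α) : Prop :=
  ∃ a ∈ A, σ.getLast? = some a

/-- `AlternatePrecedence(B, A)`: every `A`-position is preceded by a `B`-position
with no `A`-position strictly in between. -/
def AltPrecC {α : Type} (B A : Set α) (σ : List α) : Prop :=
  ∀ i : Fin σ.length, σ.get i ∈ A →
    ∃ j : Fin σ.length, j < i ∧ σ.get j ∈ B ∧
      ∀ k : Fin σ.length, j < k → k < i → σ.get k ∉ A

/-- The Declare constraint that Algorithm 1 generates from place `p`: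
`AlternatePrecedence(•p, p•)` if both `•p` and `p•` are nonempty,
`AtMostOne(p•)` if `•p = ∅`, and `End(•p)` if `p• = ∅`. -/
def PlaceConstraint (N : WorkflowNet P T) (p : P) (σ : List T) : Prop :=
  if preset N p = ∅ then AtMostOneC (postset N p) σ
  else if postset N p = ∅ then EndC (preset N p) σ
  else AltPrecC (preset N p) (postset N p) σ

/-- A model trace of the specification `DS(WN)`: it satisfies the
constraint generated from every place of the net. -/
def ModelTrace (N : WorkflowNet P T) (σ : List T) : Prop :=
  ∀ p : P, PlaceConstraint N p σ

/-!
Follow the token count of a single place `p` along a run. A transition outside `•p` cannot raise it,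
so every token consumed from `p` must have been produced by an earlier transition of `•p`; since
the net is safe, a consumption empties `p`, and nothing can be consumed again before the next
production. This gives `AlternatePrecedence(•p, p•)`, and `AtMostOne(▶•)` because `▶` starts with a
single token and is never refilled. For `End(•■)`: if the last transition did not produce into `■`,
then `■` would already be marked before it, so by proper completion the marking before it would be
final, which enables no transition.
-/

noncomputable def fireStep (N : WorkflowNet P T) (M : P → ℕ) (t : T) : P → ℕ :=
  fun p => if N.Fpt p t ∧ ¬ N.Ftp t p then M p - 1
    else if N.Ftp t p ∧ ¬ N.Fpt p t then M p + 1 else M p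

noncomputable def markingAfter (N : WorkflowNet P T) (M : P → ℕ) (σ : List T) (k : ℕ) : P → ℕ :=
  (σ.take k).foldl (fireStep N) M

section Firing

variable {N : WorkflowNet P T} {M M' M'' : P → ℕ} {t : T} {σ τ : List T} {p : P}

theorem Fires.eq_fireStep (h : Fires N M t M') : M' = fireStep N M t := by
  funext p
  obtain ⟨hconsume, hproduce, hkeep⟩ := h.2 p
  unfold fireStep
  split_ifs with h₁ h₂
  exacts [hconsume h₁, hproduce h₂, hkeep h₁ h₂]

theorem Fires.apply_le_of_notMem_preset (h : Fires N M t M') (hp : t ∉ preset N p) :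
    M' p ≤ M p := by
  have hp : ¬ N.Ftp t p := hp
  rw [h.eq_fireStep]
  simp only [fireStep, hp, false_and, if_false]
  split_ifs <;> omega

theorem Fires.apply_eq_zero_of_mem_postset (h : Fires N M t M') (hc : t ∈ postset N p)
    (hp : t ∉ preset N p) (hM : M p ≤ 1) : M' p = 0 := by
  have := h.1 p hc
  rw [(h.2 p).1 ⟨hc, hp⟩]
  omega

@[simp]
theorem markingAfter_zero : markingAfter N M σ 0 = M := rfl

@[simp]
theorem markingAfter_cons_succ (k : ℕ) :
    markingAfter N M (t :: σ) (k + 1) = markingAfter N (fireStep N M t) σ k := by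
  simp [markingAfter]

namespace FiresSeq

theorem eq_of_nil (h : FiresSeq N M [] M') : M = M' := by
  cases h
  rfl

theorem fires_of_singleton (h : FiresSeq N M [t] M') : Fires N M t M' := by
  cases h with
  | cons hf hnil => exact hnil.eq_of_nil ▸ hf

theorem of_append (h : FiresSeq N M (σ ++ τ) M'') :
    ∃ M', FiresSeq N M σ M' ∧ FiresSeq N M' τ M'' := by
  induction σ generalizing M with
  | nil => exact ⟨M, .nil M, h⟩
  | cons t σ ih =>
    cases h with
    | cons hf hs =>
      obtain ⟨M', hσ, hτ⟩ := ih hs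
      exact ⟨M', .cons hf hσ, hτ⟩

theorem take (h : FiresSeq N M σ M') (k : ℕ) :
    FiresSeq N M (σ.take k) (markingAfter N M σ k) := by
  induction h generalizing k with
  | nil M => simpa [markingAfter] using FiresSeq.nil M
  | @cons M _ _ t σ hf _ ih =>
    cases k with
    | zero => exact .nil M
    | succ k =>
      rw [markingAfter_cons_succ, ← hf.eq_fireStep]
      exact .cons hf (ih k)

theorem fires_getElem (h : FiresSeq N M σ M') {k : ℕ} (hk : k < σ.length) :
    Fires N (markingAfter N M σ k) σ[k] (markingAfter N M σ (k + 1)) := by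
  induction h generalizing k with
  | nil => simp at hk
  | @cons M _ _ t σ hf _ ih =>
    cases k with
    | zero => simpa [markingAfter, ← hf.eq_fireStep] using hf
    | succ k =>
      rw [markingAfter_cons_succ, markingAfter_cons_succ, ← hf.eq_fireStep]
      exact ih (by simpa using hk)

theorem markingAfter_le (h : FiresSeq N M σ M') {a b : ℕ} (hab : a ≤ b) (hb : b ≤ σ.length)
    (hno : ∀ k (hk : k < σ.length), a ≤ k → k < b → σ[k] ∉ preset N p) :
    markingAfter N M σ b p ≤ markingAfter N M σ a p := by
  induction b, hab using Nat.le_induction with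
  | base => exact le_rfl
  | succ b hab ih =>
    have hb' : b < σ.length := by omega
    calc markingAfter N M σ (b + 1) p ≤ markingAfter N M σ b p :=
          (h.fires_getElem hb').apply_le_of_notMem_preset (hno b hb' hab (by omega))
      _ ≤ markingAfter N M σ a p := ih (by omega) fun k hk h₁ h₂ => hno k hk h₁ (by omega)

theorem exists_last_producer (h : FiresSeq N M σ M') (hM : M p = 0) {i : ℕ}
    (hi : i ≤ σ.length) (hpos : 0 < markingAfter N M σ i p) :
    ∃ j, ∃ hj : j < i, σ[j] ∈ preset N p ∧
      ∀ k (hk : k < σ.length), j < k → k < i → σ[k] ∉ preset N p := by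
  induction i with
  | zero => simp [hM] at hpos
  | succ i ih =>
    have hi' : i < σ.length := by omega
    by_cases hprod : σ[i] ∈ preset N p
    · exact ⟨i, by omega, hprod, fun k _ h₁ h₂ => by omega⟩
    · obtain ⟨j, hj, hjp, hlast⟩ :=
        ih hi'.le (hpos.trans_le ((h.fires_getElem hi').apply_le_of_notMem_preset hprod))
      refine ⟨j, by omega, hjp, fun k hk h₁ h₂ => ?_⟩
      rcases Nat.lt_succ_iff_lt_or_eq.mp h₂ with h₂ | rfl
      exacts [hlast k hk h₁ h₂, hprod]

theorem atMostOneC_postset (h : FiresSeq N M σ M') (hp : preset N p = ∅) (hM : M p ≤ 1) :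
    AtMostOneC (postset N p) σ := by
  have hno : ∀ t, t ∉ preset N p := by simp [hp]
  suffices ∀ i j : Fin σ.length, i < j → σ.get i ∈ postset N p → σ.get j ∉ postset N p by
    intro i j hi hj
    rcases lt_trichotomy i j with hij | hij | hij
    exacts [absurd hj (this i j hij hi), hij, absurd hi (this j i hij hj)]
  intro i j hij hi hj
  have hi₁ : markingAfter N M σ i p ≤ 1 :=
    (h.markingAfter_le (Nat.zero_le _) i.2.le fun _ _ _ _ => hno _).trans hM
  have hemptied := (h.fires_getElem i.2).apply_eq_zero_of_mem_postset hi (hno _) hi₁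
  have hj₀ := h.markingAfter_le (p := p) (a := i + 1) hij j.2.le fun _ _ _ _ => hno _
  have hj₁ := (h.fires_getElem j.2).1 p hj
  omega

theorem altPrecC_preset_postset (h : FiresSeq N M σ M') (hM : M p = 0)
    (hsafe : ∀ k, markingAfter N M σ k p ≤ 1) :
    AltPrecC (preset N p) (postset N p) σ := by
  intro i hi
  have hpos : 0 < markingAfter N M σ i p := (h.fires_getElem i.2).1 p hi
  obtain ⟨j, hji, hj, hlast⟩ := h.exists_last_producer hM i.2.le hpos
  refine ⟨⟨j, hji.trans i.2⟩, hji, hj, fun k hjk hki hk => ?_⟩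
  simp only [Fin.lt_def] at hjk hki
  have hemptied :=
    (h.fires_getElem k.2).apply_eq_zero_of_mem_postset hk (hlast k k.2 hjk hki) (hsafe k)
  have := h.markingAfter_le (a := k + 1) hki i.2.le fun m hm h₁ h₂ => hlast m hm (by omega) h₂
  omega

end FiresSeq

end Firing

theorem WorkflowNet.exists_fpt (N : WorkflowNet P T) (t : T) : ∃ p, N.Fpt p t := by
  rcases (N.on_path (.inr t)).1.cases_tail with h | ⟨_ | _, _, hedge⟩
  · cases h
  · exact ⟨_, hedge⟩
  · exact hedge.elim

theorem not_enables_finalMarking (N : WorkflowNet P T) (t : T) :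
    ¬ Enables N (finalMarking N) t := by
  obtain ⟨p, hp⟩ := N.exists_fpt t
  intro hen
  by_cases hps : p = N.sink
  · exact N.sink_post_empty t (hps ▸ hp)
  · simpa [finalMarking, hps] using hen p hp

section Run

variable {N : WorkflowNet P T} {σ : List T}

theorem IsRun.ne_nil (hne : N.source ≠ N.sink) (hrun : IsRun N σ) : σ ≠ [] := by
  rintro rfl
  simpa [initialMarking, finalMarking, hne] using congrFun (FiresSeq.eq_of_nil hrun) N.source

theorem IsRun.endC_preset_sink (hne : N.source ≠ N.sink) (hrun : IsRun N σ)
    (hcomplete : ∀ M, Reachable N M → 0 < M N.sink → M = finalMarking N) :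
    EndC (preset N N.sink) σ := by
  obtain ⟨τ, t, rfl⟩ := σ.eq_nil_or_concat.resolve_left (hrun.ne_nil hne)
  rw [List.concat_eq_append] at hrun ⊢
  obtain ⟨M, hτ, ht⟩ := FiresSeq.of_append hrun
  have hfire := ht.fires_of_singleton
  refine ⟨t, ?_, by simp⟩
  by_contra hprod
  have hsink : 1 ≤ M N.sink := by
    simpa [finalMarking] using hfire.apply_le_of_notMem_preset hprod
  exact not_enables_finalMarking N t (hcomplete M ⟨τ, hτ⟩ hsink ▸ hfire.1)

end Run

theorem run_is_model_trace_general {P T : Type}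
    (N : WorkflowNet P T) (hsafe : Safe N) (hsound : Sound N)
    (hne : N.source ≠ N.sink) :
    ∀ σ : List T, IsRun N σ → ModelTrace N σ := by
  intro σ hrun p
  unfold PlaceConstraint
  split_ifs with hpre hpost
  · exact FiresSeq.atMostOneC_postset hrun hpre (by unfold initialMarking; split_ifs <;> simp)
  · obtain rfl : p = N.sink := N.sink_unique p fun t ht => (hpost ▸ ht : t ∈ (∅ : Set T))
    exact hrun.endC_preset_sink hne hsound.2.1
  · have hp : p ≠ N.source := by
      rintro rfl
      exact hpre (Set.eq_empty_of_forall_notMem N.source_pre_empty)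
    exact FiresSeq.altPrecC_preset_postset hrun (by simp [initialMarking, hp])
      fun k => hsafe _ ⟨_, hrun.take k⟩ p

/-- Theorem 1, direction (i): every run of a safe and sound workflow net
(with `▶ ≠ ■`) is a model trace of the synthesized Declare specification. -/
theorem run_is_model_trace {P T : Type} [Finite P] [Finite T]
    (N : WorkflowNet P T) (hsafe : Safe N) (hsound : Sound N)
    (hne : N.source ≠ N.sink) :
    ∀ σ : List T, IsRun N σ → ModelTrace N σ :=
  run_is_model_trace_general N hsafe hsound hne
end

section
/- Let WN = (P, T, F) be a safe and sound workflow net with at least one transition (equivalently, with ▶ ≠ ■). Then every finite trace over the alphabet T that is a model trace of the Declare specification DS(WN) is a run of WN. (Theorem 1, direction (ii).) -/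
open Classical

variable {P T : Type}

/-! Along a model trace every transition is enabled when it occurs, so the trace fires. For a place
`p` the marking equation says that after firing a prefix `τ`, `M p + #(p• in τ) = M₀ p + #(•p in τ)`.
At `▶` the constraint `AtMostOne(▶•)` keeps `#(▶• in τ) = 0` before an occurrence of `▶•`, so the
token is still there; at any other input place `p`, `AlternatePrecedence(•p, p•)` forces
`#(p• in τ) < #(•p in τ)` before an occurrence of `p•`. At the end, `End(•■)` puts a token on `■`,
and proper completion of a sound net makes the reached marking the final one. -/

section Counting

variable {α : Type} {A B : Set α} {σ : List α}

lemma List.countP_take_add_one (q : α → Bool) {n : ℕ} (hn : n < σ.length) :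
    (σ.take (n + 1)).countP q = (σ.take n).countP q + if q σ[n] then 1 else 0 := by
  rw [← List.take_concat_get' σ n hn, List.countP_append, List.countP_singleton]

lemma List.countP_take_eq_of_forall_not {q : α → Bool} {m n : ℕ} (hmn : m ≤ n)
    (hn : n ≤ σ.length) (h : ∀ k (hk : k < σ.length), m ≤ k → k < n → q σ[k] = false) :
    (σ.take n).countP q = (σ.take m).countP q := by
  induction n, hmn using Nat.le_induction with
  | base => rfl
  | succ n hmn ih =>
    rw [List.countP_take_add_one q (by omega), h n (by omega) hmn (by omega),
      ih (by omega) fun k hk hmk hkn => h k hk hmk (by omega)]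
    rfl

lemma AtMostOneC.countP_take_eq_zero (h : AtMostOneC A σ) {n : ℕ} (hn : n < σ.length)
    (hA : σ[n] ∈ A) : (σ.take n).countP (· ∈ A) = 0 := by
  refine List.countP_eq_zero.2 fun x hx hxA => ?_
  obtain ⟨k, hk, rfl⟩ := List.mem_iff_getElem.1 hx
  rw [List.length_take] at hk
  have hkn := h ⟨k, by omega⟩ ⟨n, hn⟩ (by simpa using hxA) hA
  simp only [Fin.mk.injEq] at hkn
  omega

/-- If `j` witnesses the `A` at `n`, no `A` lies strictly between them, so
`#A[0, n) = #A[0, j] ≤ #B[0, j) < #B[0, n)`; this needs the weak bound at earlier positions. -/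
lemma AltPrecC.countP_take (h : AltPrecC B A σ) (n : ℕ) :
    (σ.take n).countP (· ∈ A) ≤ (σ.take n).countP (· ∈ B) ∧
      ∀ hn : n < σ.length, σ[n] ∈ A →
        (σ.take n).countP (· ∈ A) < (σ.take n).countP (· ∈ B) := by
  induction n using Nat.strong_induction_on with
  | _ n ih =>
    have before_A : ∀ m (hm : m < σ.length), m < n →
        (σ.take (m + 1)).countP (· ∈ A) ≤ (σ.take m).countP (· ∈ B) := by
      intro m hm hmn
      rw [List.countP_take_add_one _ hm]
      by_cases hA : σ[m] ∈ A
      · simpa [hA] using (ih m hmn).2 hm hA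
      · simpa [hA] using (ih m hmn).1
    refine ⟨?_, fun hn hA => ?_⟩
    · rcases n with _ | m
      · simp
      by_cases hm : m < σ.length
      · have hB := List.countP_take_add_one (· ∈ B) hm
        have := before_A m hm (by omega)
        omega
      · rw [List.take_of_length_le (by omega),
          ← List.take_of_length_le (l := σ) (by omega : σ.length ≤ m)]
        exact (ih m (by omega)).1
    · obtain ⟨⟨j, hj⟩, hjn, hjB, hgap⟩ := h ⟨n, hn⟩ hA
      have hjn : j < n := hjn
      have gap : (σ.take n).countP (· ∈ A) = (σ.take (j + 1)).countP (· ∈ A) :=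
        List.countP_take_eq_of_forall_not (by omega) hn.le fun k hk hjk hkn => by
          simpa using hgap ⟨k, hk⟩ (show j < k by omega) hkn
      have hjB : σ[j] ∈ B := hjB
      have hB : (σ.take (j + 1)).countP (· ∈ B) = (σ.take j).countP (· ∈ B) + 1 := by
        simpa [hjB] using List.countP_take_add_one (· ∈ B) hj
      have hmono := (List.take_prefix_take_left (l := σ) (show j + 1 ≤ n by omega)).countP_le
        (p := (· ∈ B))
      have := before_A j hj hjn
      omega

lemma AltPrecC.countP_take_lt (h : AltPrecC B A σ) {n : ℕ} (hn : n < σ.length) (hA : σ[n] ∈ A) :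
    (σ.take n).countP (· ∈ A) < (σ.take n).countP (· ∈ B) :=
  (h.countP_take n).2 hn hA

lemma EndC.countP_pos (h : EndC A σ) : 0 < σ.countP (· ∈ A) := by
  obtain ⟨a, ha, hlast⟩ := h
  exact List.countP_pos_iff.2 ⟨a, List.mem_of_getLast? hlast, by simpa using ha⟩

end Counting

section Firing

variable {N : WorkflowNet P T} {M M' : P → ℕ} {t : T} {σ : List T} {p : P}

lemma preset_eq_empty_iff : preset N p = ∅ ↔ p = N.source := by
  refine ⟨fun h => N.source_unique p fun t ht => ?_, fun h => ?_⟩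
  · exact (h ▸ ht : t ∈ (∅ : Set T))
  · ext t
    simpa [preset, h] using N.source_pre_empty t

lemma postset_eq_empty_iff : postset N p = ∅ ↔ p = N.sink := by
  refine ⟨fun h => N.sink_unique p fun t ht => ?_, fun h => ?_⟩
  · exact (h ▸ ht : t ∈ (∅ : Set T))
  · ext t
    simpa [postset, h] using N.sink_post_empty t

lemma PlaceConstraint.atMostOneC (h : PlaceConstraint N N.source σ) :
    AtMostOneC (postset N N.source) σ := by
  rwa [PlaceConstraint, if_pos (preset_eq_empty_iff.2 rfl)] at h

lemma PlaceConstraint.altPrecC (h : PlaceConstraint N p σ) (hp : p ≠ N.source)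
    (ht : t ∈ postset N p) : AltPrecC (preset N p) (postset N p) σ := by
  rwa [PlaceConstraint, if_neg (mt preset_eq_empty_iff.1 hp),
    if_neg (Set.nonempty_iff_ne_empty.1 ⟨t, ht⟩)] at h

lemma PlaceConstraint.endC (h : PlaceConstraint N N.sink σ) (hne : N.source ≠ N.sink) :
    EndC (preset N N.sink) σ := by
  rwa [PlaceConstraint, if_neg (mt preset_eq_empty_iff.1 hne.symm),
    if_pos (postset_eq_empty_iff.2 rfl)] at h

lemma exists_fires_of_enables (h : Enables N M t) : ∃ M', Fires N M t M' := by
  refine ⟨fun p => if N.Fpt p t ∧ ¬ N.Ftp t p then M p - 1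
    else if N.Ftp t p ∧ ¬ N.Fpt p t then M p + 1 else M p, h, fun p => ⟨?_, ?_, ?_⟩⟩
  · intro h₁
    simp only [if_pos h₁]
  · intro h₂
    simp only [if_neg fun h₁ : N.Fpt p t ∧ ¬ N.Ftp t p => h₁.2 h₂.1, if_pos h₂]
  · intro h₁ h₂
    simp only [if_neg h₁, if_neg h₂]

lemma FiresSeq.snoc {M₀ : P → ℕ} (h : FiresSeq N M₀ σ M) (ht : Fires N M t M') :
    FiresSeq N M₀ (σ ++ [t]) M' := by
  induction h with
  | nil => exact .cons ht (.nil _)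
  | cons hf _ ih => exact .cons hf (ih ht)

lemma exists_firesSeq_of_forall_enables {M₀ : P → ℕ}
    (h : ∀ n (hn : n < σ.length) M, FiresSeq N M₀ (σ.take n) M → Enables N M σ[n]) :
    ∃ M, FiresSeq N M₀ σ M := by
  suffices ∀ n ≤ σ.length, ∃ M, FiresSeq N M₀ (σ.take n) M by
    simpa using this σ.length le_rfl
  intro n
  induction n with
  | zero => exact fun _ => ⟨M₀, .nil M₀⟩
  | succ n ih =>
    intro hn
    obtain ⟨M, hM⟩ := ih (by omega)
    obtain ⟨M', hM'⟩ := exists_fires_of_enables (h n hn M hM)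
    exact ⟨M', List.take_concat_get' σ n hn ▸ hM.snoc hM'⟩

lemma Fires.marking_add (h : Fires N M t M') (p : P) :
    M' p + (if t ∈ postset N p then 1 else 0) = M p + if t ∈ preset N p then 1 else 0 := by
  obtain ⟨hen, hM'⟩ := h
  obtain ⟨hout, hin, hsame⟩ := hM' p
  by_cases hpost : N.Fpt p t <;> by_cases hpre : N.Ftp t p
  · simp [postset, preset, hpost, hpre, hsame]
  · have := hen p hpost
    simp only [postset, preset, Set.mem_ofPred_eq, hpost, hpre, hout ⟨hpost, hpre⟩, if_true,
      if_false, add_zero]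
    omega
  · simp [postset, preset, hpost, hpre, hin]
  · simp [postset, preset, hpost, hpre, hsame]

lemma FiresSeq.marking_add_countP (h : FiresSeq N M σ M') (p : P) :
    M' p + σ.countP (· ∈ postset N p) = M p + σ.countP (· ∈ preset N p) := by
  induction h with
  | nil => rfl
  | cons ht _ ih =>
    have := ht.marking_add p
    simp only [List.countP_cons, decide_eq_true_eq]
    omega

lemma ModelTrace.enables (hσ : ModelTrace N σ) {n : ℕ} (hn : n < σ.length)
    (hM : FiresSeq N (initialMarking N) (σ.take n) M) : Enables N M σ[n] := by
  intro p hp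
  have hmark := hM.marking_add_countP p
  by_cases hsrc : p = N.source
  · subst hsrc
    rw [(hσ N.source).atMostOneC.countP_take_eq_zero hn hp] at hmark
    simp only [initialMarking, if_true] at hmark
    omega
  · have := ((hσ p).altPrecC hsrc hp).countP_take_lt hn hp
    simp only [initialMarking, if_neg hsrc] at hmark
    omega

lemma ModelTrace.marking_sink_pos (hσ : ModelTrace N σ) (hne : N.source ≠ N.sink)
    (hM : FiresSeq N (initialMarking N) σ M) : 0 < M N.sink := by
  have hmark := hM.marking_add_countP N.sink
  have hin := ((hσ N.sink).endC hne).countP_pos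
  have hout : σ.countP (· ∈ postset N N.sink) = 0 :=
    List.countP_eq_zero.2 fun t _ => by simp [postset, N.sink_post_empty t]
  simp only [initialMarking, if_neg hne.symm] at hmark
  omega

end Firing

theorem model_trace_is_run_general {P T : Type}
    (N : WorkflowNet P T) (hsound : Sound N)
    (hne : N.source ≠ N.sink) :
    ∀ σ : List T, ModelTrace N σ → IsRun N σ := by
  intro σ hσ
  obtain ⟨M, hM⟩ := exists_firesSeq_of_forall_enables fun n hn _ => hσ.enables hn
  have hfinal : M = finalMarking N := hsound.2.1 M ⟨σ, hM⟩ (hσ.marking_sink_pos hne hM)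
  rwa [hfinal] at hM

/-- Theorem 1, direction (ii): every finite trace over the transitions of a
safe and sound workflow net (with `▶ ≠ ■`) that is a model trace of the
synthesized Declare specification is a run of the net. -/
theorem model_trace_is_run {P T : Type} [Finite P] [Finite T]
    (N : WorkflowNet P T) (hsafe : Safe N) (hsound : Sound N)
    (hne : N.source ≠ N.sink) :
    ∀ σ : List T, ModelTrace N σ → IsRun N σ :=
  model_trace_is_run_general N hsound hne
end

section
/- Let WN = (P, T, F) be a safe and sound workflow net and let p ∈ P be a place with both •p and p• nonempty. Then every firing sequence σ = ⟨t₁, …, tₙ⟩ of WN satisfies the constraint AlternatePrecedence(•p, p•): for every index i with tᵢ ∈ p• there is an index j < i with tⱼ ∈ •p and tₖ ∉ p• for all k with j < k < i. -/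
/-!
A place with a producer is not the initial place, so it starts empty. In a safe net a consumer
of `p` fires on the only token of `p` and removes it, while every other transition either
refills `p` or leaves it alone. Hence, along any firing sequence, a token on `p` is always
backed by an occurrence of a producer that no consumer occurrence has followed yet (`Pending`),
and a consumer can only fire on such a token.
-/

open Classical

variable {P T : Type}

def Pending {α : Type} (B A : Set α) (σ : List α) : Prop :=
  ∃ j : Fin σ.length, σ.get j ∈ B ∧ ∀ k : Fin σ.length, j < k → σ.get k ∉ A

section Traces

variable {α : Type} {A B : Set α} {σ : List α} {a : α}

lemma get_append_singleton_of_lt (i : Fin (σ ++ [a]).length) (hi : i.val < σ.length) :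
    (σ ++ [a]).get i = σ.get ⟨i.val, hi⟩ := by
  simp [List.getElem_append_left hi]

lemma get_append_singleton_of_eq (i : Fin (σ ++ [a]).length) (hi : i.val = σ.length) :
    (σ ++ [a]).get i = a := by
  simp [hi]

lemma val_lt_or_eq_of_append_singleton (i : Fin (σ ++ [a]).length) :
    i.val < σ.length ∨ i.val = σ.length := by
  have := i.isLt
  simp only [List.length_append, List.length_singleton] at this
  omega

lemma altPrecC_nil : AltPrecC B A [] := fun i => i.elim0

lemma pending_append_singleton_of_mem (ha : a ∈ B) : Pending B A (σ ++ [a]) := by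
  refine ⟨⟨σ.length, by simp⟩, by rwa [get_append_singleton_of_eq _ rfl], fun k hk => ?_⟩
  have hlt : σ.length < k.val := hk
  rcases val_lt_or_eq_of_append_singleton k with hk' | hk' <;> omega

lemma Pending.append_singleton (h : Pending B A σ) (ha : a ∉ A) : Pending B A (σ ++ [a]) := by
  obtain ⟨j, hjB, hjA⟩ := h
  refine ⟨⟨j.val, by simp⟩, by rwa [get_append_singleton_of_lt _ j.isLt], fun k hk => ?_⟩
  rcases val_lt_or_eq_of_append_singleton k with hk' | hk'
  · rw [get_append_singleton_of_lt k hk']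
    exact hjA ⟨k.val, hk'⟩ hk
  · rwa [get_append_singleton_of_eq k hk']

lemma AltPrecC.append_singleton (h : AltPrecC B A σ) (ha : a ∈ A → Pending B A σ) :
    AltPrecC B A (σ ++ [a]) := by
  intro i hiA
  rcases val_lt_or_eq_of_append_singleton i with hi | hi
  · rw [get_append_singleton_of_lt i hi] at hiA
    obtain ⟨j, hji, hjB, hjA⟩ := h ⟨i.val, hi⟩ hiA
    refine ⟨⟨j.val, by simp⟩, hji, by rwa [get_append_singleton_of_lt _ j.isLt],
      fun k hjk hki => ?_⟩
    have hk : k.val < σ.length := lt_trans hki hi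
    rw [get_append_singleton_of_lt k hk]
    exact hjA ⟨k.val, hk⟩ hjk hki
  · rw [get_append_singleton_of_eq i hi] at hiA
    obtain ⟨j, hjB, hjA⟩ := ha hiA
    refine ⟨⟨j.val, by simp⟩, Fin.lt_def.mpr (by simp only; omega),
      by rwa [get_append_singleton_of_lt _ j.isLt], fun k hjk hki => ?_⟩
    have hk : k.val < σ.length := by rw [Fin.lt_def] at hki; omega
    rw [get_append_singleton_of_lt k hk]
    exact hjA ⟨k.val, hk⟩ hjk

end Traces

section Firing

variable {N : WorkflowNet P T} {M M' : P → ℕ} {σ τ : List T} {t : T} {p : P}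

lemma FiresSeq.exists_of_append :
    FiresSeq N M (σ ++ τ) M' → ∃ M₁, FiresSeq N M σ M₁ ∧ FiresSeq N M₁ τ M' := by
  induction σ generalizing M with
  | nil => exact fun h => ⟨M, .nil M, h⟩
  | cons t σ ih =>
    rintro (_ | ⟨hf, hs⟩)
    obtain ⟨M₁, h₁, h₂⟩ := ih hs
    exact ⟨M₁, .cons hf h₁, h₂⟩

lemma FiresSeq.fires_of_singleton_s11 (h : FiresSeq N M [t] M') : Fires N M t M' := by
  rcases h with _ | ⟨hf, (_ | _)⟩
  exact hf

lemma Fires.notMem_postset_and_pos_of_pos (hf : Fires N M t M') (hM : M p ≤ 1)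
    (hpos : 0 < M' p) (ht : t ∉ preset N p) : t ∉ postset N p ∧ 0 < M p := by
  by_cases htp : t ∈ postset N p
  · have := (hf.2 p).1 ⟨htp, ht⟩
    omega
  · refine ⟨htp, ?_⟩
    rwa [← (hf.2 p).2.2 (fun h => htp h.1) (fun h => ht h.1)]

lemma FiresSeq.altPrecC_and_pending (hsafe : Safe N) (hp : p ≠ N.source)
    (h : FiresSeq N (initialMarking N) σ M) :
    AltPrecC (preset N p) (postset N p) σ ∧ (0 < M p → Pending (preset N p) (postset N p) σ) := by
  induction σ using List.reverseRecOn generalizing M with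
  | nil =>
    cases h
    exact ⟨altPrecC_nil, fun hpos => by simp [initialMarking, hp] at hpos⟩
  | append_singleton σ t ih =>
    obtain ⟨M₁, h₁, hlast⟩ := h.exists_of_append
    have hf := hlast.fires_of_singleton_s11
    obtain ⟨hAlt, hPending⟩ := ih h₁
    refine ⟨hAlt.append_singleton fun ht => hPending (hf.1 p ht), fun hpos => ?_⟩
    by_cases ht : t ∈ preset N p
    · exact pending_append_singleton_of_mem ht
    · obtain ⟨htp, hpos₁⟩ := hf.notMem_postset_and_pos_of_pos (hsafe M₁ ⟨σ, h₁⟩ p) hpos ht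
      exact (hPending hpos₁).append_singleton htp

end Firing

theorem firingSequence_altPrec_general {P T : Type}
    (N : WorkflowNet P T) (hsafe : Safe N)
    (p : P) (hpre : preset N p ≠ ∅) :
    ∀ σ : List T, FiringSequence N σ →
      AltPrecC (preset N p) (postset N p) σ := by
  have hp : p ≠ N.source := by
    rintro rfl
    obtain ⟨t, ht⟩ := Set.nonempty_iff_ne_empty.mpr hpre
    exact N.source_pre_empty t ht
  rintro σ ⟨M, hM⟩
  exact (hM.altPrecC_and_pending hsafe hp).1

/-- In a safe and sound workflow net, for every place `p` with both `•p` and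
`p•` nonempty, every firing sequence satisfies
`AlternatePrecedence(•p, p•)`. -/
theorem firingSequence_altPrec {P T : Type} [Finite P] [Finite T]
    (N : WorkflowNet P T) (hsafe : Safe N) (hsound : Sound N)
    (p : P) (hpre : preset N p ≠ ∅) (hpost : postset N p ≠ ∅) :
    ∀ σ : List T, FiringSequence N σ →
      AltPrecC (preset N p) (postset N p) σ :=
  firingSequence_altPrec_general N hsafe p hpre
end

section
/- Let WN = (P, T, F) be a workflow net. Then every nonempty finite trace over T that satisfies all constraints of the Declare specification DS(WN) begins with a transition of ▶•, the postset of the initial place. (Indeed, every transition not in ▶• has an input place p ≠ ▶ with •p ≠ ∅, hence occurs in the consequent parameter of some AlternatePrecedence constraint of DS(WN), so it cannot occur first.) -/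
open Classical

variable {P T : Type}

theorem AltPrecC.head_notMem {α : Type} {B A : Set α} {a : α} {σ : List α}
    (h : AltPrecC B A (a :: σ)) : a ∉ A := fun ha => by
  obtain ⟨j, hj, -⟩ := h ⟨0, by simp⟩ ha
  exact Fin.not_lt_zero j hj

namespace WorkflowNet

theorem exists_input_place (N : WorkflowNet P T) (t : T) : ∃ p, N.Fpt p t := by
  obtain ⟨hpath, -⟩ := N.on_path (Sum.inr t)
  obtain ⟨b, -, hedge⟩ :=
    (Relation.ReflTransGen.cases_tail hpath).resolve_left Sum.inr_ne_inl
  cases b with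
  | inl p => exact ⟨p, hedge⟩
  | inr _ => exact hedge.elim

theorem preset_nonempty_of_ne_source (N : WorkflowNet P T) {p : P} (hp : p ≠ N.source) :
    (preset N p).Nonempty := by
  by_contra h
  exact hp (N.source_unique p fun t ht => h ⟨t, ht⟩)

end WorkflowNet

theorem ModelTrace.postset_head_notMem {N : WorkflowNet P T} {p : P} {t : T} {σ : List T}
    (h : ModelTrace N (t :: σ)) (hp : p ≠ N.source) : t ∉ postset N p := fun ht => by
  have hc := h p
  rw [PlaceConstraint, if_neg (N.preset_nonempty_of_ne_source hp).ne_empty,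
    if_neg (Set.nonempty_of_mem ht).ne_empty] at hc
  exact hc.head_notMem ht

theorem model_trace_starts_in_source_postset_general {P T : Type}
    (N : WorkflowNet P T) :
    ∀ (t : T) (σ : List T), ModelTrace N (t :: σ) →
      t ∈ postset N N.source := by
  intro t σ h
  obtain ⟨p, hpt⟩ := N.exists_input_place t
  by_cases hp : p = N.source
  · exact hp ▸ hpt
  · exact absurd hpt (h.postset_head_notMem hp)

/-- In any workflow net, every nonempty trace satisfying all constraints of
the synthesized Declare specification begins with a transition of `▶•`. -/
theorem model_trace_starts_in_source_postset {P T : Type} [Finite P] [Finite T]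
    (N : WorkflowNet P T) :
    ∀ (t : T) (σ : List T), ModelTrace N (t :: σ) →
      t ∈ postset N N.source :=
  model_trace_starts_in_source_postset_general N
end

section
/- Let WN = (P, T, F) be a safe and sound workflow net and let σ be a finite trace over T that satisfies the constraint AtMostOne(▶•) and, for every place p ∈ P with both •p and p• nonempty, the constraint AlternatePrecedence(•p, p•). Then σ is a firing sequence of WN: replaying σ from the initial marking M₀, every transition of σ is enabled at the marking reached when it is fired. -/
open Classical

variable {P T : Type}

/-!
A transition `σ[i]` can only be blocked by an empty input place `p`. If `p` has no
producers it is the initial place, which starts with a token, and `AtMostOne(▶•)` says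
that no earlier transition of `σ` consumed it. Otherwise `AlternatePrecedence(•p, p•)`
provides an earlier producer `σ[j]` of `p`; by induction `σ[j]` was enabled, so after it
fires `p` is marked (also when `σ[j]` is a self-loop on `p`), and no consumer of `p`
occurs strictly between `j` and `i`.
-/

namespace WorkflowNet

variable (N : WorkflowNet P T)

lemma eq_source_of_preset_eq_empty {p : P} (hp : preset N p = ∅) : p = N.source :=
  N.source_unique p fun t ht => (Set.eq_empty_iff_forall_notMem.mp hp) t ht

/-- The marking obtained by firing `t` at `M`, whether or not `t` is enabled. -/
noncomputable def fire (M : P → ℕ) (t : T) : P → ℕ :=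
  fun p =>
    if N.Fpt p t ∧ ¬ N.Ftp t p then M p - 1
    else if N.Ftp t p ∧ ¬ N.Fpt p t then M p + 1
    else M p

variable {N}

lemma fires_fire {M : P → ℕ} {t : T} (h : Enables N M t) : Fires N M t (N.fire M t) := by
  refine ⟨h, fun p => ⟨fun hc => if_pos hc, fun hp => ?_, fun hc hp => ?_⟩⟩
  · rw [fire, if_neg fun hc => hp.2 hc.1, if_pos hp]
  · rw [fire, if_neg hc, if_neg hp]

lemma le_fire_of_not_fpt {M : P → ℕ} {t : T} {p : P} (h : ¬ N.Fpt p t) :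
    M p ≤ N.fire M t p := by
  rw [fire, if_neg fun hc => h hc.1]
  split <;> omega

lemma fire_pos_of_ftp {M : P → ℕ} {t : T} {p : P} (hen : Enables N M t) (h : N.Ftp t p) :
    0 < N.fire M t p := by
  by_cases hc : N.Fpt p t
  · rw [fire, if_neg fun hd => hd.2 h, if_neg fun hd => hd.2 hc]
    exact hen p hc
  · rw [fire, if_neg fun hd => hc hd.1, if_pos ⟨h, hc⟩]
    omega

variable (N)

noncomputable def replay (M : P → ℕ) (σ : List T) (k : ℕ) : P → ℕ :=
  (σ.take k).foldl N.fire M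

variable {N}

lemma replay_succ (M : P → ℕ) {σ : List T} {k : ℕ} (hk : k < σ.length) :
    N.replay M σ (k + 1) = N.fire (N.replay M σ k) σ[k] := by
  rw [replay, List.take_add_one, List.getElem?_eq_getElem hk, Option.toList_some,
    List.foldl_append, List.foldl_cons, List.foldl_nil, replay]

lemma firesSeq_replay {M : P → ℕ} {σ : List T}
    (h : ∀ i (hi : i < σ.length), Enables N (N.replay M σ i) σ[i]) :
    FiresSeq N M σ (N.replay M σ σ.length) := by
  induction σ generalizing M with
  | nil => exact .nil M
  | cons t σ ih =>
    refine .cons (fires_fire (h 0 (Nat.succ_pos _))) (ih fun i hi => ?_)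
    exact h (i + 1) (Nat.succ_lt_succ hi)

lemma replay_le_replay {M : P → ℕ} {σ : List T} {p : P} {j i : ℕ} (hji : j ≤ i)
    (hi : i ≤ σ.length) (h : ∀ k (hk : k < σ.length), j ≤ k → k < i → ¬ N.Fpt p σ[k]) :
    N.replay M σ j p ≤ N.replay M σ i p := by
  induction i, hji using Nat.le_induction with
  | base => rfl
  | succ i hji ih =>
    calc N.replay M σ j p ≤ N.replay M σ i p :=
          ih (Nat.le_of_succ_le hi) fun k hk hjk hki => h k hk hjk (hki.trans i.lt_succ_self)
      _ ≤ N.replay M σ (i + 1) p := by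
          rw [replay_succ M hi]
          exact le_fire_of_not_fpt (h i hi hji i.lt_succ_self)

lemma le_replay_of_atMostOne {M : P → ℕ} {σ : List T} {p : P} {i : ℕ} (hi : i < σ.length)
    (h : AtMostOneC (postset N p) σ) (hσi : σ[i] ∈ postset N p) :
    M p ≤ N.replay M σ i p :=
  replay_le_replay (Nat.zero_le i) hi.le fun k hk _ hki hkp => by
    have := h ⟨k, hk⟩ ⟨i, hi⟩ hkp hσi
    simp only [Fin.mk.injEq] at this
    omega

lemma replay_pos_of_altPrecC {M : P → ℕ} {σ : List T} {p : P} {i : ℕ} (hi : i < σ.length)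
    (hen : ∀ j (hj : j < i), Enables N (N.replay M σ j) σ[j])
    (h : AltPrecC (preset N p) (postset N p) σ) (hσi : σ[i] ∈ postset N p) :
    0 < N.replay M σ i p := by
  obtain ⟨⟨j, hj⟩, hji, hjp, hbetween⟩ := h ⟨i, hi⟩ hσi
  have hji : j < i := hji
  have hmarked : 0 < N.replay M σ (j + 1) p := by
    rw [replay_succ M hj]
    exact fire_pos_of_ftp (hen j hji) hjp
  refine hmarked.trans_le (replay_le_replay hji hi.le fun k hk hjk hki => ?_)
  exact hbetween ⟨k, hk⟩ (show j < k by omega) hki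

end WorkflowNet

theorem constrained_trace_is_firingSequence_general {P T : Type}
    (N : WorkflowNet P T)
    (σ : List T)
    (h1 : AtMostOneC (postset N N.source) σ)
    (h2 : ∀ p : P, preset N p ≠ ∅ → postset N p ≠ ∅ →
      AltPrecC (preset N p) (postset N p) σ) :
    FiringSequence N σ := by
  have henabled : ∀ i (hi : i < σ.length), Enables N (N.replay (initialMarking N) σ i) σ[i] := by
    intro i
    induction i using Nat.strong_induction_on with
    | _ i ih =>
      intro hi p hp
      by_cases hpre : preset N p = ∅
      · obtain rfl := N.eq_source_of_preset_eq_empty hpre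
        have hsource : 0 < initialMarking N N.source := by simp [initialMarking]
        exact hsource.trans_le (WorkflowNet.le_replay_of_atMostOne hi h1 hp)
      · exact WorkflowNet.replay_pos_of_altPrecC hi (fun j hj => ih j hj _)
          (h2 p hpre (Set.nonempty_of_mem hp).ne_empty) hp
  exact ⟨_, WorkflowNet.firesSeq_replay henabled⟩

/-- In a safe and sound workflow net, every finite trace satisfying
`AtMostOne(▶•)` and, for every place `p` with both `•p` and `p•` nonempty,
`AlternatePrecedence(•p, p•)`, is a firing sequence of the net: replaying it
from the initial marking, every transition is enabled when it is fired. -/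
theorem constrained_trace_is_firingSequence {P T : Type} [Finite P] [Finite T]
    (N : WorkflowNet P T) (hsafe : Safe N) (hsound : Sound N)
    (σ : List T)
    (h1 : AtMostOneC (postset N N.source) σ)
    (h2 : ∀ p : P, preset N p ≠ ∅ → postset N p ≠ ∅ →
      AltPrecC (preset N p) (postset N p) σ) :
    FiringSequence N σ :=
  constrained_trace_is_firingSequence_general N σ h1 h2
end
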